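/- Let (V,μ,ν) be a weighted graph that is uniformly locally finite with constant K := inf_{v∈V} ν(v)/μ(v) > 0. Let p ∈ (1,∞), let q ∈ [p−1,∞), and set s := q/(p−1) (so s ≥ 1). Then there exists a constant C = C(K,p,q) such that for every u ∈ ℓ^q_ν(V): the series defining L_p u(v) converges absolutely for every v ∈ V, L_p u ∈ ℓ^s_ν(V), and ‖L_p u‖_{ℓ^s_ν} ≤ C ‖u‖_{ℓ^q_ν}^{p−1}. Moreover, if in addition p ≥ 2 and ν is nondegenerate (inf_{v∈V} ν(v) > 0), then for every q ∈ [1,∞) there is a constant C' (depending on K, p, q and inf_v ν(v)) such that ‖L_p u‖_{ℓ^q_ν} ≤ C' ‖u‖_{ℓ^q_ν}^{p−1} for all u ∈ ℓ^q_ν(V); in particular L_p maps ℓ^q_ν(V) into ℓ^q_ν(V). -/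

import Mathlib

/-!
Pointwise `|L_p u(v)| ≤ ν(v)⁻¹ ∑_w μ(v,w) |u(v) - u(w)|^(p-1)`. The weights `μ(v,·)` have total
mass at most `ν(v)/K`, so Jensen's inequality bounds the `s`-th power of this average, times
`ν(v)`, by `K^(1-s) ∑_w μ(v,w) |u(v) - u(w)|^q` (as `(p-1) s = q`). Summed over `v`, this
`q`-energy is at most `2^(q+1) K⁻¹ ‖u‖_q^q`: split `|u(v) - u(w)|^q ≤ 2^q (|u(v)|^q + |u(w)|^q)`
and use the symmetry of `μ` to move the second term onto `w`.

For `p ≥ 2` and `ν ≥ ε > 0`, every `u ∈ ℓ^q_ν` is bounded by `ε^(-1/q) ‖u‖_q`, hence lies in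
`ℓ^(q(p-1))_ν`, and the first bound with exponent `q(p-1)` in place of `q` gives the `ℓ^q_ν` bound.
-/

/-- The `ℓ^q_ν`-norm of a function on the nodes of a weighted graph. -/
noncomputable def lqNorm {V : Type*} (ν : V → ℝ) (q : ℝ) (f : V → ℝ) : ℝ :=
  (∑' v, |f v| ^ q * ν v) ^ (1 / q)

/-- The discrete `p`-Laplacian on a weighted graph (pointwise, via a `tsum`). -/
noncomputable def pLap {V : Type*} (μ : V → V → ℝ) (ν : V → ℝ) (p : ℝ)
    (f : V → ℝ) (v : V) : ℝ :=
  (1 / ν v) * ∑' w, μ v w * |f v - f w| ^ (p - 2) * (f v - f w)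

open Real

theorem abs_sub_rpow_le {q : ℝ} (hq : 0 ≤ q) (x y : ℝ) :
    |x - y| ^ q ≤ 2 ^ q * (|x| ^ q + |y| ^ q) := by
  have hmax : max |x| |y| ^ q ≤ |x| ^ q + |y| ^ q := by
    rcases le_total |x| |y| with h | h
    · rw [max_eq_right h]; linarith [rpow_nonneg (abs_nonneg x) q]
    · rw [max_eq_left h]; linarith [rpow_nonneg (abs_nonneg y) q]
  calc |x - y| ^ q ≤ (2 * max |x| |y|) ^ q := by
        gcongr; linarith [abs_sub x y, le_max_left |x| |y|, le_max_right |x| |y|]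
    _ = 2 ^ q * max |x| |y| ^ q := mul_rpow zero_le_two (by positivity)
    _ ≤ 2 ^ q * (|x| ^ q + |y| ^ q) := by gcongr

theorem summable_and_rpow_tsum_mul_le {ι : Type*} {m a : ι → ℝ} {s : ℝ} (hs : 1 ≤ s)
    (hm : ∀ i, 0 ≤ m i) (ha : ∀ i, 0 ≤ a i) (hm_sum : Summable m)
    (hma_sum : Summable fun i => m i * a i ^ s) :
    Summable (fun i => m i * a i) ∧
      (∑' i, m i * a i) ^ s ≤ (∑' i, m i) ^ (s - 1) * ∑' i, m i * a i ^ s := by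
  have hs0 : s ≠ 0 := by positivity
  have hM : 0 ≤ ∑' i, m i := tsum_nonneg hm
  have hmas : ∀ i, 0 ≤ m i * a i ^ s := fun i => mul_nonneg (hm i) (rpow_nonneg (ha i) s)
  have hY : 0 ≤ ∑' i, m i * a i ^ s := tsum_nonneg hmas
  have hfin : ∀ F : Finset ι, ∑ i ∈ F, m i * a i ≤
      (∑' i, m i) ^ (1 - s⁻¹) * (∑' i, m i * a i ^ s) ^ s⁻¹ := fun F =>
    (inner_le_weight_mul_Lp_of_nonneg F hs m a hm ha).trans <|
      mul_le_mul
        (rpow_le_rpow (F.sum_nonneg fun i _ => hm i) (hm_sum.sum_le_tsum F fun i _ => hm i)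
          (sub_nonneg.2 (inv_le_one_of_one_le₀ hs)))
        (rpow_le_rpow (F.sum_nonneg fun i _ => hmas i) (hma_sum.sum_le_tsum F fun i _ => hmas i)
          (by positivity))
        (rpow_nonneg (F.sum_nonneg fun i _ => hmas i) _) (by positivity)
  have hsum := summable_of_sum_le (fun i => mul_nonneg (hm i) (ha i)) hfin
  refine ⟨hsum, ?_⟩
  calc (∑' i, m i * a i) ^ s
      ≤ ((∑' i, m i) ^ (1 - s⁻¹) * (∑' i, m i * a i ^ s) ^ s⁻¹) ^ s := by
        gcongr
        · exact tsum_nonneg fun i => mul_nonneg (hm i) (ha i)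
        · exact hsum.tsum_le_of_sum_le hfin
    _ = (∑' i, m i) ^ (s - 1) * ∑' i, m i * a i ^ s := by
        rw [mul_rpow (by positivity) (by positivity), ← rpow_mul hM, ← rpow_mul hY,
          inv_mul_cancel₀ hs0, rpow_one, sub_mul, inv_mul_cancel₀ hs0, one_mul]

theorem summable_and_rpow_average_le {ι : Type*} {m a : ι → ℝ} {n K s : ℝ} (hn : 0 < n)
    (hK : 0 < K) (hs : 1 ≤ s) (hm : ∀ i, 0 ≤ m i) (ha : ∀ i, 0 ≤ a i) (hm_sum : Summable m)
    (hKm : K * ∑' i, m i ≤ n) (hma_sum : Summable fun i => m i * a i ^ s) :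
    Summable (fun i => m i * a i) ∧
      ((1 / n) * ∑' i, m i * a i) ^ s * n ≤ K⁻¹ ^ (s - 1) * ∑' i, m i * a i ^ s := by
  obtain ⟨hsum, hjensen⟩ := summable_and_rpow_tsum_mul_le hs hm ha hm_sum hma_sum
  refine ⟨hsum, ?_⟩
  have hM : 0 ≤ ∑' i, m i := tsum_nonneg hm
  have hX : 0 ≤ ∑' i, m i * a i := tsum_nonneg fun i => mul_nonneg (hm i) (ha i)
  calc ((1 / n) * ∑' i, m i * a i) ^ s * n
      = (∑' i, m i * a i) ^ s * (1 / n) ^ (s - 1) := by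
        rw [mul_rpow (by positivity) hX, rpow_sub_one (by positivity), one_div, inv_rpow hn.le]
        field_simp
    _ ≤ (∑' i, m i) ^ (s - 1) * (∑' i, m i * a i ^ s) * (1 / n) ^ (s - 1) := by
        gcongr
    _ = ((∑' i, m i) / n) ^ (s - 1) * ∑' i, m i * a i ^ s := by
        rw [one_div, div_eq_mul_inv, mul_rpow hM (by positivity)]; ring
    _ ≤ K⁻¹ ^ (s - 1) * ∑' i, m i * a i ^ s := by
        gcongr
        · exact tsum_nonneg fun i => mul_nonneg (hm i) (rpow_nonneg (ha i) s)
        · rw [div_le_iff₀ hn, ← div_eq_inv_mul, le_div_iff₀ hK]; linarith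

section WeightedGraph

variable {V : Type*} {μ : V → V → ℝ} {ν : V → ℝ}

theorem summable_and_tsum_degree_mul_le (hμnn : ∀ v w, 0 ≤ μ v w) {K : ℝ} (hK : 0 < K)
    (hulf : ∀ v, K * ∑' w, μ v w ≤ ν v) {c : V → ℝ} (hc : ∀ v, 0 ≤ c v)
    (hcν : Summable fun v => c v * ν v) :
    Summable (fun v => (∑' w, μ v w) * c v) ∧
      ∑' v, (∑' w, μ v w) * c v ≤ K⁻¹ * ∑' v, c v * ν v := by
  have hle : ∀ v, (∑' w, μ v w) * c v ≤ K⁻¹ * (c v * ν v) := fun v =>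
    calc (∑' w, μ v w) * c v = K⁻¹ * ((K * ∑' w, μ v w) * c v) := by field_simp
      _ ≤ K⁻¹ * (ν v * c v) := by gcongr; exacts [hc v, hulf v]
      _ = K⁻¹ * (c v * ν v) := by ring
  have hsum := (hcν.mul_left K⁻¹).of_nonneg_of_le
    (fun v => mul_nonneg (tsum_nonneg (hμnn v)) (hc v)) hle
  exact ⟨hsum, (hsum.tsum_le_tsum hle (hcν.mul_left K⁻¹)).trans_eq tsum_mul_left⟩

theorem summable_and_tsum_tsum_mul_eq_of_symm (hμsymm : ∀ v w, μ v w = μ w v)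
    (hμnn : ∀ v w, 0 ≤ μ v w) (hloc : ∀ v, Summable (μ v)) {c : V → ℝ} (hc : ∀ v, 0 ≤ c v)
    (hdc : Summable fun v => (∑' w, μ v w) * c v) :
    (∀ v, Summable fun w => μ v w * c w) ∧ Summable (fun v => ∑' w, μ v w * c w) ∧
      ∑' v, ∑' w, μ v w * c w = ∑' v, (∑' w, μ v w) * c v := by
  have hf : Summable (Function.uncurry fun w v => μ w v * c w) :=
    (summable_prod_of_nonneg fun x => mul_nonneg (hμnn _ _) (hc _)).2
      ⟨fun w => (hloc w).mul_right (c w), by simpa only [tsum_mul_right] using hdc⟩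
  have hrow : ∀ v, (fun w => μ v w * c w) = fun w => μ w v * c w :=
    fun v => funext fun w => by rw [hμsymm]
  simp only [hrow]
  refine ⟨fun v => hf.prod_symm.prod_factor v, hf.prod_symm.prod, ?_⟩
  rw [hf.tsum_comm]
  simp only [tsum_mul_right]

theorem summable_and_tsum_energy_le (hμsymm : ∀ v w, μ v w = μ w v)
    (hμnn : ∀ v w, 0 ≤ μ v w) (hloc : ∀ v, Summable (μ v)) {K : ℝ} (hK : 0 < K)
    (hulf : ∀ v, K * ∑' w, μ v w ≤ ν v) {q : ℝ} (hq : 0 ≤ q) {u : V → ℝ}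
    (hu : Summable fun v => |u v| ^ q * ν v) :
    (∀ v, Summable fun w => μ v w * |u v - u w| ^ q) ∧
      Summable (fun v => ∑' w, μ v w * |u v - u w| ^ q) ∧
      ∑' v, ∑' w, μ v w * |u v - u w| ^ q ≤ 2 ^ (q + 1) * K⁻¹ * ∑' v, |u v| ^ q * ν v := by
  set c : V → ℝ := fun v => |u v| ^ q
  have hc : ∀ v, 0 ≤ c v := fun v => rpow_nonneg (abs_nonneg _) q
  obtain ⟨hdeg, hdeg_le⟩ := summable_and_tsum_degree_mul_le hμnn hK hulf hc hu
  obtain ⟨hrow, hcross, hcross_eq⟩ := summable_and_tsum_tsum_mul_eq_of_symm hμsymm hμnn hloc hc hdeg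
  have hdom : ∀ v, Summable fun w => 2 ^ q * (μ v w * c v + μ v w * c w) :=
    fun v => (((hloc v).mul_right (c v)).add (hrow v)).mul_left _
  have hterm : ∀ v w, μ v w * |u v - u w| ^ q ≤ 2 ^ q * (μ v w * c v + μ v w * c w) :=
    fun v w => by
      rw [← mul_add, mul_left_comm]
      exact mul_le_mul_of_nonneg_left (abs_sub_rpow_le hq _ _) (hμnn v w)
  have henergy_row : ∀ v, Summable fun w => μ v w * |u v - u w| ^ q := fun v =>
    (hdom v).of_nonneg_of_le (fun w => mul_nonneg (hμnn v w) (rpow_nonneg (abs_nonneg _) q))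
      (hterm v)
  have hrow_le : ∀ v, ∑' w, μ v w * |u v - u w| ^ q ≤
      2 ^ q * ((∑' w, μ v w) * c v + ∑' w, μ v w * c w) := fun v => by
    refine ((henergy_row v).tsum_le_tsum (hterm v) (hdom v)).trans_eq ?_
    rw [tsum_mul_left, ((hloc v).mul_right (c v)).tsum_add (hrow v), tsum_mul_right]
  have hdom_sum : Summable fun v => 2 ^ q * ((∑' w, μ v w) * c v + ∑' w, μ v w * c w) :=
    (hdeg.add hcross).mul_left _
  have hsum := hdom_sum.of_nonneg_of_le
    (fun v => tsum_nonneg fun w => mul_nonneg (hμnn v w) (rpow_nonneg (abs_nonneg _) q)) hrow_le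
  refine ⟨henergy_row, hsum, (hsum.tsum_le_tsum hrow_le hdom_sum).trans ?_⟩
  rw [tsum_mul_left, hdeg.tsum_add hcross, hcross_eq, rpow_add_one two_ne_zero]
  have := mul_le_mul_of_nonneg_left (add_le_add hdeg_le hdeg_le) (by positivity : (0:ℝ) ≤ 2 ^ q)
  linarith

theorem lqNorm_nonneg (hν : ∀ v, 0 ≤ ν v) (q : ℝ) (f : V → ℝ) : 0 ≤ lqNorm ν q f :=
  rpow_nonneg (tsum_nonneg fun v => mul_nonneg (rpow_nonneg (abs_nonneg _) q) (hν v)) _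

theorem lqNorm_le_of_tsum_le (hν : ∀ v, 0 ≤ ν v) {f u : V → ℝ} {q s D : ℝ} (hq : q ≠ 0)
    (hs : 0 < s) (hD : 0 ≤ D) (h : ∑' v, |f v| ^ s * ν v ≤ D * ∑' v, |u v| ^ q * ν v) :
    lqNorm ν s f ≤ D ^ (1 / s) * lqNorm ν q u ^ (q / s) := by
  have hS : 0 ≤ ∑' v, |u v| ^ q * ν v :=
    tsum_nonneg fun v => mul_nonneg (rpow_nonneg (abs_nonneg _) q) (hν v)
  calc lqNorm ν s f ≤ (D * ∑' v, |u v| ^ q * ν v) ^ (1 / s) :=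
        rpow_le_rpow (tsum_nonneg fun v => mul_nonneg (rpow_nonneg (abs_nonneg _) s) (hν v)) h
          (by positivity)
    _ = D ^ (1 / s) * lqNorm ν q u ^ (q / s) := by
        rw [mul_rpow hD hS, lqNorm, ← rpow_mul hS]
        congr 2
        field_simp

theorem abs_pLap_le (hμnn : ∀ v w, 0 ≤ μ v w) {v : V} (hν : 0 ≤ ν v) {p : ℝ} (hp : 1 < p)
    {u : V → ℝ} (hrow : Summable fun w => μ v w * |u v - u w| ^ (p - 1)) :
    |pLap μ ν p u v| ≤ (1 / ν v) * ∑' w, μ v w * |u v - u w| ^ (p - 1) := by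
  have hterm : ∀ w, ‖μ v w * |u v - u w| ^ (p - 2) * (u v - u w)‖ =
      μ v w * |u v - u w| ^ (p - 1) := fun w => by
    rw [norm_eq_abs, abs_mul, abs_mul, abs_of_nonneg (hμnn v w),
      abs_of_nonneg (rpow_nonneg (abs_nonneg _) _), show p - 1 = p - 2 + 1 by ring,
      rpow_add_one' (abs_nonneg _) (by linarith), mul_assoc]
  rw [pLap, abs_mul, abs_of_nonneg (one_div_nonneg.2 hν), ← norm_eq_abs]
  exact mul_le_mul_of_nonneg_left ((norm_tsum_le_tsum_norm
    (hrow.congr fun w => (hterm w).symm)).trans_eq (tsum_congr hterm)) (one_div_nonneg.2 hν)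

theorem summable_and_lqNorm_pLap_le (hμsymm : ∀ v w, μ v w = μ w v)
    (hμnn : ∀ v w, 0 ≤ μ v w) (hν : ∀ v, 0 < ν v) (hloc : ∀ v, Summable (μ v)) {K : ℝ}
    (hK : 0 < K) (hulf : ∀ v, K * ∑' w, μ v w ≤ ν v) {p : ℝ} (hp : 1 < p) {q : ℝ}
    (hq : p - 1 ≤ q) {u : V → ℝ} (hu : Summable fun v => |u v| ^ q * ν v) :
    (∀ v, Summable fun w => μ v w * |u v - u w| ^ (p - 1)) ∧
      Summable (fun v => |pLap μ ν p u v| ^ (q / (p - 1)) * ν v) ∧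
      lqNorm ν (q / (p - 1)) (pLap μ ν p u) ≤
        (2 ^ (q + 1) * K⁻¹ ^ (q / (p - 1))) ^ ((p - 1) / q) * lqNorm ν q u ^ (p - 1) := by
  have hp1 : 0 < p - 1 := by linarith
  have hq0 : 0 < q := hp1.trans_le hq
  set s := q / (p - 1) with hs_def
  have hs : 1 ≤ s := (one_le_div hp1).2 hq
  obtain ⟨henergy_row, henergy, henergy_le⟩ :=
    summable_and_tsum_energy_le hμsymm hμnn hloc hK hulf hq0.le hu
  have hpow : ∀ v w, (|u v - u w| ^ (p - 1)) ^ s = |u v - u w| ^ q := fun v w => by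
    rw [← rpow_mul (abs_nonneg _), hs_def, mul_div_cancel₀ _ hp1.ne']
  have havg := fun v => summable_and_rpow_average_le (hν v) hK hs (hμnn v)
    (fun w => rpow_nonneg (abs_nonneg (u v - u w)) (p - 1)) (hloc v) (hulf v)
    (by simpa only [hpow] using henergy_row v)
  have hpt : ∀ v, |pLap μ ν p u v| ^ s * ν v ≤
      K⁻¹ ^ (s - 1) * ∑' w, μ v w * |u v - u w| ^ q := fun v =>
    calc |pLap μ ν p u v| ^ s * ν v
        ≤ ((1 / ν v) * ∑' w, μ v w * |u v - u w| ^ (p - 1)) ^ s * ν v := by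
          gcongr
          · exact (hν v).le
          · exact abs_pLap_le hμnn (hν v).le hp (havg v).1
      _ ≤ K⁻¹ ^ (s - 1) * ∑' w, μ v w * |u v - u w| ^ q := by
          simpa only [hpow] using (havg v).2
  have hsum := (henergy.mul_left _).of_nonneg_of_le
    (fun v => mul_nonneg (rpow_nonneg (abs_nonneg _) s) (hν v).le) hpt
  refine ⟨fun v => (havg v).1, hsum, ?_⟩
  have hexp : (p - 1) / q = 1 / s := by rw [hs_def, one_div_div]
  have hq_s : p - 1 = q / s := by rw [hs_def, div_div_cancel₀ hq0.ne']
  rw [hexp, hq_s]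
  refine lqNorm_le_of_tsum_le (fun v => (hν v).le) hq0.ne' (by positivity) (by positivity) ?_
  calc ∑' v, |pLap μ ν p u v| ^ s * ν v
      ≤ K⁻¹ ^ (s - 1) * ∑' v, ∑' w, μ v w * |u v - u w| ^ q :=
        (hsum.tsum_le_tsum hpt (henergy.mul_left _)).trans_eq tsum_mul_left
    _ ≤ K⁻¹ ^ (s - 1) * (2 ^ (q + 1) * K⁻¹ * ∑' v, |u v| ^ q * ν v) := by gcongr
    _ = 2 ^ (q + 1) * K⁻¹ ^ s * ∑' v, |u v| ^ q * ν v := by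
        rw [rpow_sub_one (inv_ne_zero hK.ne')]
        field_simp

theorem abs_le_rpow_mul_lqNorm {ε : ℝ} (hε : 0 < ε) (hεν : ∀ v, ε ≤ ν v) {q : ℝ} (hq : 0 < q)
    {u : V → ℝ} (hu : Summable fun v => |u v| ^ q * ν v) (v : V) :
    |u v| ≤ ε ^ (-(1 / q)) * lqNorm ν q u := by
  have hS : 0 ≤ ∑' v, |u v| ^ q * ν v :=
    tsum_nonneg fun v => mul_nonneg (rpow_nonneg (abs_nonneg _) q) (hε.trans_le (hεν v)).le
  have hpt : |u v| ^ q ≤ (∑' v, |u v| ^ q * ν v) / ε := by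
    rw [le_div_iff₀ hε]
    calc |u v| ^ q * ε ≤ |u v| ^ q * ν v := by gcongr; exact hεν v
      _ ≤ ∑' v, |u v| ^ q * ν v := hu.le_tsum v fun w _ =>
          mul_nonneg (rpow_nonneg (abs_nonneg _) q) (hε.trans_le (hεν w)).le
  calc |u v| = (|u v| ^ q) ^ (1 / q) := by
        rw [← rpow_mul (abs_nonneg _), mul_one_div_cancel hq.ne', rpow_one]
    _ ≤ ((∑' v, |u v| ^ q * ν v) / ε) ^ (1 / q) := by gcongr
    _ = ε ^ (-(1 / q)) * lqNorm ν q u := by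
        rw [div_eq_inv_mul, mul_rpow (inv_nonneg.2 hε.le) hS, inv_rpow hε.le, ← rpow_neg hε.le,
          lqNorm]

theorem summable_and_lqNorm_le_of_abs_le (hν : ∀ v, 0 ≤ ν v) {T : ℝ} (hT : 0 ≤ T) {u : V → ℝ}
    (hu_le : ∀ v, |u v| ≤ T) {q r : ℝ} (hq : 0 < q) (hqr : q ≤ r)
    (hu : Summable fun v => |u v| ^ q * ν v) :
    Summable (fun v => |u v| ^ r * ν v) ∧
      lqNorm ν r u ≤ T ^ (1 - q / r) * lqNorm ν q u ^ (q / r) := by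
  have hr : 0 < r := hq.trans_le hqr
  have hpt : ∀ v, |u v| ^ r * ν v ≤ T ^ (r - q) * (|u v| ^ q * ν v) := fun v => by
    rw [show r = (r - q) + q by ring, rpow_add' (abs_nonneg _) (by linarith), add_sub_cancel_right,
      mul_assoc]
    exact mul_le_mul_of_nonneg_right (rpow_le_rpow (abs_nonneg _) (hu_le v) (by linarith))
      (mul_nonneg (rpow_nonneg (abs_nonneg _) q) (hν v))
  have hsum := (hu.mul_left _).of_nonneg_of_le
    (fun v => mul_nonneg (rpow_nonneg (abs_nonneg _) r) (hν v)) hpt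
  refine ⟨hsum, ?_⟩
  have hexp : T ^ (1 - q / r) = (T ^ (r - q)) ^ (1 / r) := by
    rw [← rpow_mul hT]; congr 1; field_simp
  rw [hexp]
  exact lqNorm_le_of_tsum_le hν hq.ne' hr (by positivity)
    ((hsum.tsum_le_tsum hpt (hu.mul_left _)).trans_eq tsum_mul_left)

theorem summable_and_lqNorm_le_of_exponent_le {ε : ℝ} (hε : 0 < ε) (hεν : ∀ v, ε ≤ ν v) {q r : ℝ}
    (hq : 0 < q) (hqr : q ≤ r) {u : V → ℝ} (hu : Summable fun v => |u v| ^ q * ν v) :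
    Summable (fun v => |u v| ^ r * ν v) ∧ lqNorm ν r u ≤ ε ^ (1 / r - 1 / q) * lqNorm ν q u := by
  have hν : ∀ v, 0 ≤ ν v := fun v => (hε.trans_le (hεν v)).le
  have hN := lqNorm_nonneg hν q u
  obtain ⟨hsum, hle⟩ := summable_and_lqNorm_le_of_abs_le hν (by positivity)
    (abs_le_rpow_mul_lqNorm hε hεν hq hu) hq hqr hu
  refine ⟨hsum, hle.trans_eq ?_⟩
  have hr : 0 < r := hq.trans_le hqr
  rw [mul_rpow (by positivity) hN, mul_assoc, ← rpow_add' hN (by simp), sub_add_cancel, rpow_one,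
    ← rpow_mul hε.le]
  congr 2
  field_simp
  ring

theorem summable_and_lqNorm_pLap_le_of_two_le (hμsymm : ∀ v w, μ v w = μ w v)
    (hμnn : ∀ v w, 0 ≤ μ v w) (hν : ∀ v, 0 < ν v) (hloc : ∀ v, Summable (μ v)) {K : ℝ}
    (hK : 0 < K) (hulf : ∀ v, K * ∑' w, μ v w ≤ ν v) {p : ℝ} (hp : 2 ≤ p) {ε : ℝ} (hε : 0 < ε)
    (hεν : ∀ v, ε ≤ ν v) {q : ℝ} (hq : 1 ≤ q) {u : V → ℝ}
    (hu : Summable fun v => |u v| ^ q * ν v) :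
    Summable (fun v => |pLap μ ν p u v| ^ q * ν v) ∧
      lqNorm ν q (pLap μ ν p u) ≤
        (2 ^ (q * (p - 1) + 1) * K⁻¹ ^ q) ^ q⁻¹ * ε ^ ((2 - p) / q) * lqNorm ν q u ^ (p - 1) := by
  have hp1 : 0 < p - 1 := by linarith
  have hq0 : 0 < q := by linarith
  obtain ⟨hu_r, hembed⟩ := summable_and_lqNorm_le_of_exponent_le hε hεν hq0
    (le_mul_of_one_le_right hq0.le (by linarith : 1 ≤ p - 1)) hu
  obtain ⟨-, hsum, hle⟩ := summable_and_lqNorm_pLap_le hμsymm hμnn hν hloc hK hulf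
    (by linarith) (by nlinarith : p - 1 ≤ q * (p - 1)) hu_r
  rw [mul_div_cancel_right₀ _ hp1.ne'] at hsum hle
  rw [div_mul_cancel_right₀ hp1.ne'] at hle
  refine ⟨hsum, hle.trans ?_⟩
  have hN := lqNorm_nonneg (fun v => (hν v).le) q u
  rw [mul_assoc]
  gcongr
  calc lqNorm ν (q * (p - 1)) u ^ (p - 1)
      ≤ (ε ^ (1 / (q * (p - 1)) - 1 / q) * lqNorm ν q u) ^ (p - 1) :=
        rpow_le_rpow (lqNorm_nonneg (fun v => (hν v).le) _ _) hembed hp1.le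
    _ = ε ^ ((2 - p) / q) * lqNorm ν q u ^ (p - 1) := by
        rw [mul_rpow (by positivity) hN, ← rpow_mul hε.le]
        congr 2
        field_simp
        ring

end WeightedGraph

theorem stmt13_general {V : Type*}
    (μ : V → V → ℝ) (ν : V → ℝ)
    (hμsymm : ∀ v w, μ v w = μ w v) (hμnn : ∀ v w, 0 ≤ μ v w)
    (hν : ∀ v, 0 < ν v) (hloc : ∀ v, Summable (fun w => μ v w))
    (K : ℝ) (hK : 0 < K) (hulf : ∀ v, K * ∑' w, μ v w ≤ ν v)
    (p : ℝ) (hp : 1 < p) :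
    (∀ q : ℝ, p - 1 ≤ q → ∃ C : ℝ, ∀ u : V → ℝ,
      Summable (fun v => |u v| ^ q * ν v) →
        (∀ v, Summable (fun w => μ v w * |u v - u w| ^ (p - 1))) ∧
        Summable (fun v => |pLap μ ν p u v| ^ (q / (p - 1)) * ν v) ∧
        lqNorm ν (q / (p - 1)) (pLap μ ν p u) ≤ C * lqNorm ν q u ^ (p - 1)) ∧
    (2 ≤ p → (∃ ε : ℝ, 0 < ε ∧ ∀ v, ε ≤ ν v) →
      ∀ q : ℝ, 1 ≤ q → ∃ C' : ℝ, ∀ u : V → ℝ,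
        Summable (fun v => |u v| ^ q * ν v) →
          Summable (fun v => |pLap μ ν p u v| ^ q * ν v) ∧
          lqNorm ν q (pLap μ ν p u) ≤ C' * lqNorm ν q u ^ (p - 1)) :=
  ⟨fun _ hq => ⟨_, fun _ hu => summable_and_lqNorm_pLap_le hμsymm hμnn hν hloc hK hulf hp hq hu⟩,
    fun hp2 ⟨_, hε, hεν⟩ _ hq => ⟨_, fun _ hu =>
      summable_and_lqNorm_pLap_le_of_two_le hμsymm hμnn hν hloc hK hulf hp2 hε hεν hq hu⟩⟩

/-- mapping properties of the discrete `p`-Laplacian.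
Let `(V,μ,ν)` be uniformly locally finite with constant `K > 0` and `p ∈ (1,∞)`.
For `q ∈ [p−1,∞)` and `s := q/(p−1)` there is `C = C(K,p,q)` such that for every
`u ∈ ℓ^q_ν` the defining series of `L_p u` converge absolutely, `L_p u ∈ ℓ^s_ν` and
`‖L_p u‖_{ℓ^s_ν} ≤ C ‖u‖_{ℓ^q_ν}^{p−1}`. Moreover, if `p ≥ 2` and `ν` is
nondegenerate, then for every `q ∈ [1,∞)` there is `C'` with
`‖L_p u‖_{ℓ^q_ν} ≤ C' ‖u‖_{ℓ^q_ν}^{p−1}` for every `u ∈ ℓ^q_ν`; in particular `L_p`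
maps `ℓ^q_ν` into itself. -/
theorem stmt13 {V : Type*} [Countable V]
    (μ : V → V → ℝ) (ν : V → ℝ)
    (hμsymm : ∀ v w, μ v w = μ w v) (hμnn : ∀ v w, 0 ≤ μ v w) (hμdiag : ∀ v, μ v v = 0)
    (hν : ∀ v, 0 < ν v) (hloc : ∀ v, Summable (fun w => μ v w))
    (K : ℝ) (hK : 0 < K) (hulf : ∀ v, K * ∑' w, μ v w ≤ ν v)
    (p : ℝ) (hp : 1 < p) :
    (∀ q : ℝ, p - 1 ≤ q → ∃ C : ℝ, ∀ u : V → ℝ,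
      Summable (fun v => |u v| ^ q * ν v) →
        (∀ v, Summable (fun w => μ v w * |u v - u w| ^ (p - 1))) ∧
        Summable (fun v => |pLap μ ν p u v| ^ (q / (p - 1)) * ν v) ∧
        lqNorm ν (q / (p - 1)) (pLap μ ν p u) ≤ C * lqNorm ν q u ^ (p - 1)) ∧
    (2 ≤ p → (∃ ε : ℝ, 0 < ε ∧ ∀ v, ε ≤ ν v) →
      ∀ q : ℝ, 1 ≤ q → ∃ C' : ℝ, ∀ u : V → ℝ,
        Summable (fun v => |u v| ^ q * ν v) →
          Summable (fun v => |pLap μ ν p u v| ^ q * ν v) ∧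
          lqNorm ν q (pLap μ ν p u) ≤ C' * lqNorm ν q u ^ (p - 1)) :=
  stmt13_general μ ν hμsymm hμnn hν hloc K hK hulf p hp
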